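/- arXiv:1206.4728 — 4 statements merged into one kernel-verified Lean document; each statement's English description precedes it below -/
import Mathlib

section
/- With the Cartier operator C on rational differentials of a function field F of characteristic p: for any h ∈ F^×, C(dh/h) = dh/h. That is, logarithmic differentials are fixed by the Cartier operator. -/
/-!
Write `h = ∑ cᵢ ^ p * xⁱ` as `Φ P` for `P = ∑ cᵢ Xⁱ`, where `Φ` evaluates at `x` after raising the
coefficients to the `p`-th power. Since `d` kills `p`-th powers, `dh = Φ(P') dx`, hence
`dh/h = h⁻ᵖ Φ(P ^ (p-1) P') dx`. Sorting the monomials of `P ^ (p-1) P'` by their exponent mod `p`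
puts this form into the normal form on which `C` is defined, and `C` reads off
`h⁻¹ ∑_q coeff_{qp+p-1}(P ^ (p-1) P') x^q`. In characteristic zero `P ^ (p-1) P' = (P ^ p)' / p`,
and modulo `p` the coefficients of `P ^ p` are `p`-th powers, so `coeff_{qp+p-1}(P ^ (p-1) P')`
is `coeff_q(P') ^ p` and the sum is `Φ(P')` again.
-/

open Polynomial Finset

theorem Finset.sum_range_mul_eq_sum_sum_range {M : Type*} [AddCommMonoid M] (f : ℕ → M)
    (N p : ℕ) : ∑ m ∈ range (N * p), f m = ∑ q ∈ range N, ∑ r ∈ range p, f (q * p + r) := by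
  induction N with
  | zero => simp
  | succ n ih => rw [Nat.succ_mul, sum_range_add, ih, sum_range_succ]

namespace Polynomial

variable {p : ℕ} {R : Type*} [CommRing R]

theorem coeff_pow_pred_mul_derivative_of_charZero [IsDomain R] [CharZero R] (hp : 0 < p)
    (T : R[X]) (q : ℕ) :
    (T ^ (p - 1) * derivative T).coeff (q * p + (p - 1))
      = (q + 1 : R) * (T ^ p).coeff ((q + 1) * p) := by
  have hidx : q * p + (p - 1) + 1 = (q + 1) * p := by
    rw [add_assoc, Nat.sub_add_cancel hp, add_one_mul]
  have hderiv := congrArg (coeff · (q * p + (p - 1))) (derivative_pow T p)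
  simp only [coeff_derivative, mul_assoc, coeff_C_mul] at hderiv
  have hcast : ((q * p + (p - 1) : ℕ) : R) + 1 = (q + 1) * p := by
    exact_mod_cast congrArg (Nat.cast (R := R)) hidx
  rw [hidx, hcast] at hderiv
  apply mul_left_cancel₀ (Nat.cast_ne_zero.mpr hp.ne' : (p : R) ≠ 0)
  rw [← hderiv]
  ring

theorem coeff_pow_mul_of_expChar [ExpChar R p] (f : R[X]) (k : ℕ) :
    (f ^ p).coeff (k * p) = f.coeff k ^ p := by
  rw [← map_frobenius_expand, coeff_map, coeff_expand_mul (expChar_pos R p), frobenius_def]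

theorem coeff_pow_pred_mul_derivative_of_expChar [ExpChar R p] (P : R[X]) (q : ℕ) :
    (P ^ (p - 1) * derivative P).coeff (q * p + (p - 1)) = (derivative P).coeff q ^ p := by
  -- lift `P` to the characteristic-zero domain `MvPolynomial R ℤ`, where `p` can be cancelled
  obtain ⟨T, rfl⟩ := map_surjective _ (MvPolynomial.counit_surjective R) P
  have hT := congrArg (MvPolynomial.counit R)
    (coeff_pow_pred_mul_derivative_of_charZero (expChar_pos R p) T q)
  rw [← Polynomial.map_pow, derivative_map, ← Polynomial.map_mul, coeff_map, hT, map_mul,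
    ← coeff_map, Polynomial.map_pow, coeff_pow_mul_of_expChar, ← derivative_map, coeff_derivative,
    mul_pow, map_add, map_natCast, map_one, mul_comm]
  congr 1
  rw [← Nat.cast_succ, ← frobenius_def, map_natCast]

theorem eval₂_frobenius_eq_sum_range [ExpChar R p] (Q : R[X]) (x : R) {N : ℕ}
    (hN : Q.natDegree < N) :
    Q.eval₂ (frobenius R p) x
      = ∑ r ∈ range p, (∑ q ∈ range N, Q.coeff (q * p + r) * x ^ q) ^ p * x ^ r := by
  rw [eval₂_eq_sum_range' _ (hN.trans_le (Nat.le_mul_of_pos_right N (expChar_pos R p))),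
    sum_range_mul_eq_sum_sum_range, sum_comm]
  refine sum_congr rfl fun r _ => ?_
  rw [← frobenius_def, map_sum, sum_mul]
  refine sum_congr rfl fun q _ => ?_
  rw [map_mul, map_pow, frobenius_def, frobenius_def, pow_add, ← pow_mul]
  ring

end Polynomial

theorem Derivation.map_eval₂_frobenius {p : ℕ} [Fact p.Prime] {R M : Type*} [CommRing R]
    [CharP R p] [AddCommGroup M] [Module R M] (D : Derivation ℤ R M) (Q : R[X]) (x : R) :
    D (Q.eval₂ (frobenius R p) x) = (derivative Q).eval₂ (frobenius R p) x • D x := by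
  have hDpow (a : R) : D (a ^ p) = 0 := by
    rw [D.leibniz_pow, ← Nat.cast_smul_eq_nsmul R, CharP.cast_eq_zero, zero_smul]
  induction Q using Polynomial.induction_on' with
  | add P Q hP hQ => rw [eval₂_add, map_add, hP, hQ, derivative_add, eval₂_add, add_smul]
  | monomial n a =>
    rw [eval₂_monomial, derivative_monomial, eval₂_monomial, map_mul (frobenius R p),
      _root_.map_natCast (frobenius R p), D.leibniz,
      frobenius_def, hDpow, smul_zero, add_zero, D.leibniz_pow, ← Nat.cast_smul_eq_nsmul R,
      smul_smul, smul_smul]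

theorem cartier_pow_mul_eval₂_frobenius_smul {p : ℕ} {R M : Type*} [CommRing R] [ExpChar R p]
    [AddCommGroup M] [Module R M] (C : M → M) (x : R) (ω : M)
    (hC : ∀ c : Fin p → R, C ((∑ i : Fin p, c i ^ p * x ^ (i : ℕ)) • ω)
      = c ⟨p - 1, Nat.sub_lt (expChar_pos R p) Nat.one_pos⟩ • ω)
    (a : R) (Q : R[X]) {N : ℕ} (hN : Q.natDegree < N) :
    C ((a ^ p * Q.eval₂ (frobenius R p) x) • ω)
      = (a * ∑ q ∈ range N, Q.coeff (q * p + (p - 1)) * x ^ q) • ω := by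
  rw [eval₂_frobenius_eq_sum_range Q x hN, mul_sum]
  simp_rw [← mul_assoc, ← mul_pow]
  have hCQ := hC fun i => a * ∑ q ∈ range N, Q.coeff (q * p + i) * x ^ q
  rwa [Fin.sum_univ_eq_sum_range (fun r => (a * ∑ q ∈ range N, Q.coeff (q * p + r) * x ^ q) ^ p
    * x ^ r)] at hCQ

theorem cartier_fixes_logarithmic_differentials_general
    {p : ℕ} (hp : p.Prime)
    {F : Type*} [Field F] [CharP F p]
    {Ω : Type*} [AddCommGroup Ω] [Module F Ω]
    -- the universal derivation on rational differential forms
    (d : F → Ω)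
    (hd_add : ∀ a b : F, d (a + b) = d a + d b)
    (hd_mul : ∀ a b : F, d (a * b) = a • d b + b • d a)
    -- a separating element `x`
    (x : F)
    (hdec : ∀ g : F, ∃! c : Fin p → F, g = ∑ i : Fin p, (c i) ^ p * x ^ (i : ℕ))
    (C : Ω → Ω)
    (hC : ∀ c : Fin p → F,
      C ((∑ i : Fin p, (c i) ^ p * x ^ (i : ℕ)) • d x)
        = c ⟨p - 1, Nat.sub_lt hp.pos Nat.one_pos⟩ • d x) :
    ∀ h : F, h ≠ 0 → C (h⁻¹ • d h) = h⁻¹ • d h := by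
  have := Fact.mk hp
  intro h hh
  obtain ⟨c, hc, -⟩ := hdec h
  let D : Derivation ℤ F Ω := Derivation.mk' (AddMonoidHom.mk' d hd_add).toIntLinearMap hd_mul
  set P : F[X] := ∑ i : Fin p, Polynomial.C (c i) * X ^ (i : ℕ)
  have hP : P.eval₂ (frobenius F p) x = h := by
    simp [P, hc, eval₂_finsetSum, frobenius_def]
  have hdh : d h = (derivative P).eval₂ (frobenius F p) x • d x := by
    rw [← hP]
    exact D.map_eval₂_frobenius P x
  have hlog : h⁻¹ • d h
      = (h⁻¹ ^ p * (P ^ (p - 1) * derivative P).eval₂ (frobenius F p) x) • d x := by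
    rw [eval₂_mul, eval₂_pow, hP, hdh, smul_smul, pow_sub₀ h hh hp.one_le]
    congr 1
    rw [pow_one, inv_pow, mul_assoc, inv_mul_cancel_left₀ (pow_ne_zero p hh)]
  set N := (P ^ (p - 1) * derivative P).natDegree + (derivative P).natDegree + 1
  have hsection : ∑ q ∈ range N, (P ^ (p - 1) * derivative P).coeff (q * p + (p - 1)) * x ^ q
      = (derivative P).eval₂ (frobenius F p) x := by
    rw [eval₂_eq_sum_range' _ (by omega : (derivative P).natDegree < N)]
    simp_rw [coeff_pow_pred_mul_derivative_of_expChar, frobenius_def]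
  conv_lhs => rw [hlog, cartier_pow_mul_eval₂_frobenius_smul C x (d x) hC h⁻¹ _
    (by omega : (P ^ (p - 1) * derivative P).natDegree < N), hsection]
  rw [hdh, smul_smul]

/-- Logarithmic differentials are fixed by the Cartier operator:
for any nonzero `h ∈ F`, `C(dh/h) = dh/h`. -/
theorem cartier_fixes_logarithmic_differentials
    {p : ℕ} (hp : p.Prime)
    {F : Type*} [Field F] [CharP F p]
    {Ω : Type*} [AddCommGroup Ω] [Module F Ω]
    -- the universal derivation on rational differential forms
    (d : F → Ω)
    (hd_add : ∀ a b : F, d (a + b) = d a + d b)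
    (hd_mul : ∀ a b : F, d (a * b) = a • d b + b • d a)
    -- a separating element `x`
    (x : F)
    (hbasis : ∀ ω : Ω, ∃! g : F, ω = g • d x)
    (hdec : ∀ g : F, ∃! c : Fin p → F, g = ∑ i : Fin p, (c i) ^ p * x ^ (i : ℕ))
    (C : Ω → Ω)
    (hC : ∀ c : Fin p → F,
      C ((∑ i : Fin p, (c i) ^ p * x ^ (i : ℕ)) • d x)
        = c ⟨p - 1, Nat.sub_lt hp.pos Nat.one_pos⟩ • d x) :
    ∀ h : F, h ≠ 0 → C (h⁻¹ • d h) = h⁻¹ • d h :=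
  cartier_fixes_logarithmic_differentials_general hp d hd_add hd_mul x hdec C hC
end

section
/- Let P be a place of a function field F of characteristic p and ω a rational differential with v_P(ω) ≥ 0. Then v_P(C(ω)) ≥ 0, where C is the Cartier operator. -/
/-!
Write `ω = g dz` and `g = ∑ cᵢ^p zⁱ` (`0 ≤ i < p`). The nonzero terms have valuations
`p·v(cᵢ) + i`, pairwise distinct modulo `p`, so `v(g)` is their minimum. Hence
`p·v(c_{p-1}) + p - 1 ≥ v(g) ≥ 0`, which forces `v(c_{p-1}) ≥ 0`, and `C(ω) = c_{p-1} dz`.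
-/

namespace AddValuation

section OfNeZero

variable {R : Type*} [Ring R] [NoZeroDivisors R] [Nontrivial R] (v : R → ℤ)
  (hmul : ∀ a b : R, a ≠ 0 → b ≠ 0 → v (a * b) = v a + v b)
  (hadd : ∀ a b : R, a ≠ 0 → b ≠ 0 → a + b ≠ 0 → min (v a) (v b) ≤ v (a + b))

open Classical in
noncomputable def ofNeZero : AddValuation R (WithTop ℤ) :=
  AddValuation.of (fun x => if x = 0 then ⊤ else (v x : WithTop ℤ)) (if_pos rfl)
    (by
      have h := hmul 1 1 one_ne_zero one_ne_zero
      rw [one_mul] at h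
      simp only [one_ne_zero, if_false]
      exact_mod_cast (by omega : v 1 = 0))
    (fun x y => by
      by_cases hx : x = 0
      · simp [hx]
      by_cases hy : y = 0
      · simp [hy]
      by_cases hxy : x + y = 0
      · simp [hxy]
      simp only [hx, hy, hxy, if_false]
      exact_mod_cast hadd x y hx hy hxy)
    (fun x y => by
      by_cases hx : x = 0
      · simp [hx]
      by_cases hy : y = 0
      · simp [hy]
      simp only [mul_eq_zero, hx, hy, or_self, if_false]
      exact_mod_cast hmul x y hx hy)

theorem ofNeZero_apply {x : R} (hx : x ≠ 0) : ofNeZero v hmul hadd x = v x :=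
  if_neg hx

end OfNeZero

theorem map_sum_eq_inf {Γ₀ : Type*} [LinearOrderedAddCommMonoidWithTop Γ₀] {R : Type*} [Ring R]
    (v : AddValuation R Γ₀) {ι : Type*} {s : Finset ι} {f : ι → R}
    (hf : ∀ i ∈ s, ∀ j ∈ s, v (f i) = v (f j) → v (f i) ≠ ⊤ → i = j) :
    v (∑ i ∈ s, f i) = s.inf fun i => v (f i) := by
  classical
  refine le_antisymm ?_ (v.map_le_sum fun i hi => Finset.inf_le hi)
  rcases s.eq_empty_or_nonempty with rfl | hs
  · simp
  obtain ⟨j, hj, hmin⟩ := s.exists_min_image (fun i => v (f i)) hs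
  rw [le_antisymm (Finset.inf_le hj) (Finset.le_inf hmin)]
  by_cases htop : v (f j) = ⊤
  · exact htop ▸ le_top
  rw [Finset.sum_eq_add_sum_sdiff_singleton_of_mem hj, v.map_add_eq_of_lt_left]
  refine v.map_lt_sum htop fun i hi => (hmin i (Finset.mem_sdiff.1 hi).1).lt_of_ne fun h => ?_
  obtain ⟨his, hij⟩ := Finset.mem_sdiff.1 hi
  exact hij (Finset.mem_singleton.2 (hf j hj i his h htop).symm)

section Frobenius

variable {K : Type*} [Ring K] (v : AddValuation K (WithTop ℤ)) {p : ℕ} {z : K}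

theorem map_pow_mul_pow (hz : v z = 1) (a : K) (i : ℕ) :
    v (a ^ p * z ^ i) = p • v a + i := by
  rw [v.map_mul, v.map_pow, v.map_pow, hz, nsmul_one]

theorem eq_of_map_pow_mul_pow_eq (hz : v z = 1) {a b : K} {i j : Fin p}
    (h : v (a ^ p * z ^ (i : ℕ)) = v (b ^ p * z ^ (j : ℕ)))
    (htop : v (a ^ p * z ^ (i : ℕ)) ≠ ⊤) : i = j := by
  rw [map_pow_mul_pow v hz, map_pow_mul_pow v hz] at h
  rw [map_pow_mul_pow v hz] at htop
  obtain ⟨q, rfl⟩ := Nat.exists_eq_succ_of_ne_zero i.pos.ne'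
  generalize v a = x, v b = y at h htop
  induction x using WithTop.recTopCoe with
  | top =>
    rw [succ_nsmul, WithTop.add_top, WithTop.top_add] at htop
    exact absurd rfl htop
  | coe m =>
  induction y using WithTop.recTopCoe with
  | top =>
    rw [succ_nsmul (⊤ : WithTop ℤ) q, WithTop.add_top, WithTop.top_add] at h
    exact absurd h htop
  | coe n =>
  have h' : ((q + 1 : ℕ) : ℤ) * m + i = (q + 1 : ℕ) * n + j := by exact_mod_cast h
  have hmod := congrArg (· % ((q + 1 : ℕ) : ℤ)) h'
  simp only [Int.mul_add_emod_self_left] at hmod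
  rw [Int.emod_eq_of_lt (by positivity) (by exact_mod_cast i.isLt),
    Int.emod_eq_of_lt (by positivity) (by exact_mod_cast j.isLt)] at hmod
  exact Fin.ext (by exact_mod_cast hmod)

theorem map_sum_pow_mul_pow_le (hz : v z = 1) (c : Fin p → K) (i : Fin p) :
    v (∑ j, c j ^ p * z ^ (j : ℕ)) ≤ v (c i ^ p * z ^ (i : ℕ)) := by
  rw [v.map_sum_eq_inf fun i _ j _ => eq_of_map_pow_mul_pow_eq v hz]
  exact Finset.inf_le (Finset.mem_univ i)

theorem nonneg_of_nonneg_sum_pow_mul_pow (hp : 0 < p) (hz : v z = 1) (c : Fin p → K)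
    (h : 0 ≤ v (∑ j, c j ^ p * z ^ (j : ℕ))) : 0 ≤ v (c ⟨p - 1, Nat.sub_lt hp Nat.one_pos⟩) := by
  have hterm := h.trans (map_sum_pow_mul_pow_le v hz c ⟨p - 1, Nat.sub_lt hp Nat.one_pos⟩)
  rw [map_pow_mul_pow v hz] at hterm
  generalize v _ = x at hterm ⊢
  induction x using WithTop.recTopCoe with
  | top => exact le_top
  | coe m =>
  have hterm_int : (0 : ℤ) ≤ p * m + (p - 1 : ℕ) := by exact_mod_cast hterm
  have hpred : ((p - 1 : ℕ) : ℤ) = p - 1 := by omega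
  exact_mod_cast (by nlinarith : 0 ≤ m)

end Frobenius

end AddValuation

theorem cartier_regular_of_regular_general
    {p : ℕ} (hp : p.Prime)
    {F : Type*} [Field F]
    {Ω : Type*} [AddCommGroup Ω] [Module F Ω]
    -- the universal derivation on rational differential forms
    (d : F → Ω)
    (hd_add : ∀ a b : F, d (a + b) = d a + d b)
    -- `z` is a uniformizing parameter at the place `P` (hence a separating element)
    (z : F)
    -- `vF` is the discrete valuation of `F` at the place `P`
    (vF : F → ℤ)
    (hv_mul : ∀ a b : F, a ≠ 0 → b ≠ 0 → vF (a * b) = vF a + vF b)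
    (hv_add : ∀ a b : F, a ≠ 0 → b ≠ 0 → a + b ≠ 0 → min (vF a) (vF b) ≤ vF (a + b))
    (hz : vF z = 1)
    (hbasis : ∀ ω : Ω, ∃! g : F, ω = g • d z)
    (hdec : ∀ g : F, ∃ c : Fin p → F, g = ∑ i : Fin p, (c i) ^ p * z ^ (i : ℕ))
    -- `vΩ` is the valuation of differentials at `P`
    (vΩ : Ω → ℤ)
    (hvΩ : ∀ g : F, g ≠ 0 → vΩ (g • d z) = vF g)
    -- the Cartier operator
    (C : Ω → Ω)
    (hC : ∀ c : Fin p → F,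
      C ((∑ i : Fin p, (c i) ^ p * z ^ (i : ℕ)) • d z)
        = c ⟨p - 1, Nat.sub_lt hp.pos Nat.one_pos⟩ • d z) :
    ∀ ω : Ω, ω ≠ 0 → 0 ≤ vΩ ω → (C ω = 0 ∨ 0 ≤ vΩ (C ω)) := by
  intro ω hω hvω
  obtain ⟨g, rfl, -⟩ := hbasis ω
  have hg : g ≠ 0 := by rintro rfl; exact hω (zero_smul F _)
  have hz0 : z ≠ 0 := by
    rintro rfl
    have hd0 : d 0 = 0 := by simpa using (hd_add 0 0).symm
    exact hω (by rw [hd0, smul_zero])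
  set v := AddValuation.ofNeZero vF hv_mul hv_add
  obtain ⟨c, rfl⟩ := hdec g
  rw [hC c]
  by_cases hc : c ⟨p - 1, Nat.sub_lt hp.pos Nat.one_pos⟩ = 0
  · exact Or.inl (by rw [hc, zero_smul])
  right
  have hvz : v z = 1 := by rw [AddValuation.ofNeZero_apply _ _ _ hz0, hz]; rfl
  have hvg : 0 ≤ v (∑ i : Fin p, c i ^ p * z ^ (i : ℕ)) := by
    rw [AddValuation.ofNeZero_apply _ _ _ hg]; exact_mod_cast hvΩ _ hg ▸ hvω
  have hvc := v.nonneg_of_nonneg_sum_pow_mul_pow hp.pos hvz c hvg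
  rw [AddValuation.ofNeZero_apply _ _ _ hc] at hvc
  rw [hvΩ _ hc]
  exact_mod_cast hvc

/-- If a rational differential `ω` satisfies `v_P(ω) ≥ 0` at a place
`P`, then `v_P(C(ω)) ≥ 0` (with the convention that the zero differential has
valuation `∞`, so the conclusion holds trivially when `C(ω) = 0`). -/
theorem cartier_regular_of_regular
    {p : ℕ} (hp : p.Prime)
    {F : Type*} [Field F] [CharP F p]
    {Ω : Type*} [AddCommGroup Ω] [Module F Ω]
    -- the universal derivation on rational differential forms
    (d : F → Ω)
    (hd_add : ∀ a b : F, d (a + b) = d a + d b)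
    (hd_mul : ∀ a b : F, d (a * b) = a • d b + b • d a)
    -- `z` is a uniformizing parameter at the place `P` (hence a separating element)
    (z : F)
    -- `vF` is the discrete valuation of `F` at the place `P`
    (vF : F → ℤ)
    (hv_mul : ∀ a b : F, a ≠ 0 → b ≠ 0 → vF (a * b) = vF a + vF b)
    (hv_add : ∀ a b : F, a ≠ 0 → b ≠ 0 → a + b ≠ 0 → min (vF a) (vF b) ≤ vF (a + b))
    (hz : vF z = 1)
    (hbasis : ∀ ω : Ω, ∃! g : F, ω = g • d z)
    (hdec : ∀ g : F, ∃ c : Fin p → F, g = ∑ i : Fin p, (c i) ^ p * z ^ (i : ℕ))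
    -- `vΩ` is the valuation of differentials at `P`
    (vΩ : Ω → ℤ)
    (hvΩ : ∀ g : F, g ≠ 0 → vΩ (g • d z) = vF g)
    -- the Cartier operator
    (C : Ω → Ω)
    (hC : ∀ c : Fin p → F,
      C ((∑ i : Fin p, (c i) ^ p * z ^ (i : ℕ)) • d z)
        = c ⟨p - 1, Nat.sub_lt hp.pos Nat.one_pos⟩ • d z) :
    ∀ ω : Ω, ω ≠ 0 → 0 ≤ vΩ ω → (C ω = 0 ∨ 0 ≤ vΩ (C ω)) :=
  cartier_regular_of_regular_general hp d hd_add z vF hv_mul hv_add hz hbasis hdec vΩ hvΩ C hC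
end

section
/- Let ω be a nonzero rational differential on a function field F of characteristic p, fixed by the iterated Cartier operator C_q (q = p^ℓ), let P be a place and s a positive integer. If v_P(ω) ≥ sq − 1 then v_P(ω) ≥ sq. -/
/-!
Write `ω = g dz` and `g = ∑_{i<p} c_i^p z^i`. The terms have valuations `p v(c_i) + i`, which are
pairwise distinct modulo `p`, so `v(g)` is the valuation of one of them. If `v(g) ≡ -1 (mod p)`
that term is the last one, hence `C(g dz) = c_{p-1} dz` with `v(c_{p-1}) = (v(g) + 1)/p - 1`.
Starting from `v(ω) = sq - 1` and applying `C` `ℓ` times gives `v(C_q ω) = s - 1 < sq - 1`.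
-/

theorem Int.eq_and_eq_of_mul_add_eq_mul_add {p a b i j : ℤ} (hi : 0 ≤ i) (hip : i < p)
    (hj : 0 ≤ j) (hjp : j < p) (h : p * a + i = p * b + j) : a = b ∧ i = j := by
  have hp : 0 < p := by omega
  obtain ⟨ha, hi'⟩ := (Int.ediv_emod_unique hp).2 ⟨add_comm i (p * a), hi, hip⟩
  obtain ⟨hb, hj'⟩ :=
    (Int.ediv_emod_unique hp).2 ⟨(by rw [h, add_comm] : j + p * b = p * a + i), hj, hjp⟩
  exact ⟨ha.symm.trans hb, hi'.symm.trans hj'⟩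

namespace AddValuation

variable {F : Type*} [Field F]

open Classical in
noncomputable def ofInt (vF : F → ℤ)
    (hv_mul : ∀ a b : F, a ≠ 0 → b ≠ 0 → vF (a * b) = vF a + vF b)
    (hv_add : ∀ a b : F, a ≠ 0 → b ≠ 0 → a + b ≠ 0 → min (vF a) (vF b) ≤ vF (a + b)) :
    AddValuation F (WithTop ℤ) :=
  AddValuation.of (fun a => if a = 0 then ⊤ else (vF a : WithTop ℤ)) (by simp)
    (by simpa using hv_mul 1 1 one_ne_zero one_ne_zero)
    (by
      intro a b
      by_cases ha : a = 0
      · simp [ha]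
      by_cases hb : b = 0
      · simp [hb]
      by_cases hab : a + b = 0
      · simp [hab]
      simp only [if_neg ha, if_neg hb, if_neg hab]
      exact_mod_cast hv_add a b ha hb hab)
    (by
      intro a b
      by_cases ha : a = 0
      · simp [ha]
      by_cases hb : b = 0
      · simp [hb]
      simp only [if_neg ha, if_neg hb, if_neg (mul_ne_zero ha hb)]
      exact_mod_cast hv_mul a b ha hb)

theorem ofInt_apply {vF : F → ℤ} {hv_mul hv_add} {a : F} (ha : a ≠ 0) :
    ofInt vF hv_mul hv_add a = vF a := by
  simp [ofInt, ha]

variable {R Γ₀ : Type*} [Ring R] [LinearOrderedAddCommMonoidWithTop Γ₀]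
  (v : AddValuation R Γ₀)

theorem exists_map_sum_eq {ι : Type*} {s : Finset ι} {f : ι → R} (hs : s.Nonempty)
    (hinj : ∀ i ∈ s, ∀ j ∈ s, v (f i) = v (f j) → v (f i) ≠ ⊤ → i = j) :
    ∃ j ∈ s, v (∑ i ∈ s, f i) = v (f j) := by
  classical
  obtain ⟨j, hj, hmin⟩ := s.exists_min_image (fun i => v (f i)) hs
  refine ⟨j, hj, ?_⟩
  by_cases htop : v (f j) = ⊤
  · rw [htop]
    exact top_le_iff.1 (v.map_le_sum fun i hi => htop ▸ hmin i hi)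
  rw [Finset.sum_eq_add_sum_sdiff_singleton_of_mem hj]
  refine v.map_add_eq_of_lt_left (v.map_lt_sum htop fun i hi => ?_)
  obtain ⟨hi, hij⟩ := Finset.mem_sdiff.1 hi
  refine lt_of_le_of_ne (hmin i hi) fun h => ?_
  exact hij (Finset.mem_singleton.2 (hinj j hj i hi h htop).symm)

theorem exists_map_pow_mul_pow_eq {v : AddValuation R (WithTop ℤ)} {c z : R} (hz : v z = 1)
    {n : ℕ} (hn : n ≠ 0) (i : ℕ) (h : v (c ^ n * z ^ i) ≠ ⊤) :
    ∃ k : ℤ, v c = k ∧ v (c ^ n * z ^ i) = ((n * k + i : ℤ) : WithTop ℤ) := by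
  obtain ⟨k, hk⟩ : ∃ k : ℤ, (k : WithTop ℤ) = v c := by
    refine WithTop.ne_top_iff_exists.1 fun hc => h ?_
    obtain ⟨n, rfl⟩ := Nat.exists_eq_succ_of_ne_zero hn
    simp [pow_succ, hc]
  refine ⟨k, hk.symm, ?_⟩
  simp [← hk, hz]
  norm_cast

theorem map_coeff_last_eq_of_map_sum_eq
    (v : AddValuation R (WithTop ℤ)) {p : ℕ} (hp : 0 < p) {z : R} (hz : v z = 1)
    (c : Fin p → R) {m : ℤ}
    (h : v (∑ i : Fin p, c i ^ p * z ^ (i : ℕ)) = ((m * p - 1 : ℤ) : WithTop ℤ)) :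
    v (c ⟨p - 1, Nat.sub_lt hp Nat.one_pos⟩) = ((m - 1 : ℤ) : WithTop ℤ) := by
  have hbound (i : Fin p) : (0 : ℤ) ≤ i ∧ (i : ℤ) < p :=
    ⟨by positivity, by exact_mod_cast i.isLt⟩
  obtain ⟨j, -, hj⟩ := v.exists_map_sum_eq (f := fun i : Fin p => c i ^ p * z ^ (i : ℕ))
    (Finset.univ_nonempty_iff.2 ⟨⟨0, hp⟩⟩) (by
    rintro i - i' - hii' hne
    obtain ⟨k, -, hk⟩ := exists_map_pow_mul_pow_eq hz hp.ne' i hne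
    obtain ⟨k', -, hk'⟩ := exists_map_pow_mul_pow_eq hz hp.ne' i' (hii' ▸ hne)
    rw [hk, hk', WithTop.coe_inj] at hii'
    exact Fin.ext (by exact_mod_cast (Int.eq_and_eq_of_mul_add_eq_mul_add
      (hbound i).1 (hbound i).2 (hbound i').1 (hbound i').2 hii').2))
  obtain ⟨k, hk, hjk⟩ :=
    exists_map_pow_mul_pow_eq hz hp.ne' j (by rw [← hj, h]; exact WithTop.coe_ne_top)
  rw [hjk, h, WithTop.coe_inj] at hj
  obtain ⟨hkm, hjp⟩ := Int.eq_and_eq_of_mul_add_eq_mul_add (a := k) (b := m - 1)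
    (hbound j).1 (hbound j).2
    (by omega : (0 : ℤ) ≤ p - 1) (by omega : (p : ℤ) - 1 < p) (by linear_combination -hj)
  have : j = ⟨p - 1, Nat.sub_lt hp Nat.one_pos⟩ := Fin.ext (show (j : ℕ) = p - 1 by omega)
  rw [← this, hk, hkm]

end AddValuation

section Cartier

variable {p : ℕ} (hp : 0 < p) {R Ω : Type*} [Ring R] [AddCommGroup Ω] [Module R Ω]
  {z : R} {dz : Ω} {C : Ω → Ω}
  (hdec : ∀ g : R, ∃ c : Fin p → R, g = ∑ i : Fin p, c i ^ p * z ^ (i : ℕ))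
  (hC : ∀ c : Fin p → R,
    C ((∑ i : Fin p, c i ^ p * z ^ (i : ℕ)) • dz)
      = c ⟨p - 1, Nat.sub_lt hp Nat.one_pos⟩ • dz)
  {v : AddValuation R (WithTop ℤ)} (hz : v z = 1)
include hdec hC hz

theorem exists_cartier_smul_eq {g : R} {m : ℤ} (hg : v g = ((m * p - 1 : ℤ) : WithTop ℤ)) :
    ∃ c : R, C (g • dz) = c • dz ∧ v c = ((m - 1 : ℤ) : WithTop ℤ) := by
  obtain ⟨c, rfl⟩ := hdec g
  exact ⟨_, hC c, v.map_coeff_last_eq_of_map_sum_eq hp hz c hg⟩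

theorem exists_iterate_cartier_smul_eq (s : ℤ) (k : ℕ) {g : R}
    (hg : v g = ((s * p ^ k - 1 : ℤ) : WithTop ℤ)) :
    ∃ c : R, C^[k] (g • dz) = c • dz ∧ v c = ((s - 1 : ℤ) : WithTop ℤ) := by
  induction k generalizing g with
  | zero => exact ⟨g, rfl, by simpa using hg⟩
  | succ k ih =>
    obtain ⟨c, hCg, hc⟩ := exists_cartier_smul_eq hp hdec hC hz (m := s * p ^ k)
      (by rw [hg, pow_succ, mul_assoc])
    obtain ⟨c', hc', hvc'⟩ := ih (by rw [hc])
    exact ⟨c', by rw [Function.iterate_succ_apply, hCg, hc'], hvc'⟩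

end Cartier

theorem cartier_fixed_vanishing_general
    {p : ℕ} (hp : p.Prime)
    {F : Type*} [Field F]
    {Ω : Type*} [AddCommGroup Ω] [Module F Ω]
    -- the universal derivation on rational differential forms
    (d : F → Ω)
    (hd_add : ∀ a b : F, d (a + b) = d a + d b)
    -- `z` is a uniformizing parameter at the place `P` (hence a separating element)
    (z : F)
    -- `vF` is the discrete valuation of `F` at the place `P`
    (vF : F → ℤ)
    (hv_mul : ∀ a b : F, a ≠ 0 → b ≠ 0 → vF (a * b) = vF a + vF b)
    (hv_add : ∀ a b : F, a ≠ 0 → b ≠ 0 → a + b ≠ 0 → min (vF a) (vF b) ≤ vF (a + b))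
    (hz : vF z = 1)
    (hbasis : ∀ ω : Ω, ∃! g : F, ω = g • d z)
    (hdec : ∀ g : F, ∃ c : Fin p → F, g = ∑ i : Fin p, (c i) ^ p * z ^ (i : ℕ))
    -- `vΩ` is the valuation of differentials at `P`
    (vΩ : Ω → ℤ)
    (hvΩ : ∀ g : F, g ≠ 0 → vΩ (g • d z) = vF g)
    -- the Cartier operator
    (C : Ω → Ω)
    (hC : ∀ c : Fin p → F,
      C ((∑ i : Fin p, (c i) ^ p * z ^ (i : ℕ)) • d z)
        = c ⟨p - 1, Nat.sub_lt hp.pos Nat.one_pos⟩ • d z)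
    (ℓ : ℕ) (hℓ : 1 ≤ ℓ) :
    ∀ ω : Ω, ω ≠ 0 → C^[ℓ] ω = ω →
      ∀ s : ℤ, 1 ≤ s → s * (p : ℤ) ^ ℓ - 1 ≤ vΩ ω → s * (p : ℤ) ^ ℓ ≤ vΩ ω := by
  intro ω hω hfix s hs hge
  by_contra! hlt
  have hdz : d z ≠ 0 := fun h =>
    one_ne_zero ((hbasis 0).unique (by simp [h]) (zero_smul F _).symm)
  have hz0 : z ≠ 0 := by
    rintro rfl
    exact hdz (by simpa using hd_add 0 0)
  set v := AddValuation.ofInt vF hv_mul hv_add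
  obtain ⟨g, rfl, -⟩ := hbasis ω
  have hg0 : g ≠ 0 := by rintro rfl; simp at hω
  obtain ⟨c, hc, hvc⟩ := exists_iterate_cartier_smul_eq (v := v) hp.pos hdec hC
    (by rw [AddValuation.ofInt_apply hz0, hz]; rfl) s ℓ
    (by rw [AddValuation.ofInt_apply hg0, ← hvΩ g hg0]; congr 1; omega)
  have hc0 : c ≠ 0 := v.ne_top_iff.1 (by rw [hvc]; exact WithTop.coe_ne_top)
  rw [AddValuation.ofInt_apply hc0, WithTop.coe_inj] at hvc
  have hq : 2 ≤ (p : ℤ) ^ ℓ := by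
    calc (2 : ℤ) ≤ p := by exact_mod_cast hp.two_le
      _ ≤ (p : ℤ) ^ ℓ := le_self_pow₀ (by exact_mod_cast hp.one_lt.le) (by omega)
  have hv_fixed : vΩ (g • d z) = s - 1 := by rw [← hfix, hc, hvΩ c hc0, hvc]
  nlinarith

/-- key vanishing lemma. Let `q = p^ℓ` and let `ω` be a nonzero
rational differential fixed by the iterated Cartier operator `C_q = C^ℓ`. If
`v_P(ω) ≥ sq - 1` for some positive integer `s`, then `v_P(ω) ≥ sq`. -/
theorem cartier_fixed_vanishing
    {p : ℕ} (hp : p.Prime)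
    {F : Type*} [Field F] [CharP F p]
    {Ω : Type*} [AddCommGroup Ω] [Module F Ω]
    -- the universal derivation on rational differential forms
    (d : F → Ω)
    (hd_add : ∀ a b : F, d (a + b) = d a + d b)
    (hd_mul : ∀ a b : F, d (a * b) = a • d b + b • d a)
    -- `z` is a uniformizing parameter at the place `P` (hence a separating element)
    (z : F)
    -- `vF` is the discrete valuation of `F` at the place `P`
    (vF : F → ℤ)
    (hv_mul : ∀ a b : F, a ≠ 0 → b ≠ 0 → vF (a * b) = vF a + vF b)
    (hv_add : ∀ a b : F, a ≠ 0 → b ≠ 0 → a + b ≠ 0 → min (vF a) (vF b) ≤ vF (a + b))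
    (hz : vF z = 1)
    (hbasis : ∀ ω : Ω, ∃! g : F, ω = g • d z)
    (hdec : ∀ g : F, ∃ c : Fin p → F, g = ∑ i : Fin p, (c i) ^ p * z ^ (i : ℕ))
    -- `vΩ` is the valuation of differentials at `P`
    (vΩ : Ω → ℤ)
    (hvΩ : ∀ g : F, g ≠ 0 → vΩ (g • d z) = vF g)
    -- the Cartier operator
    (C : Ω → Ω)
    (hC : ∀ c : Fin p → F,
      C ((∑ i : Fin p, (c i) ^ p * z ^ (i : ℕ)) • d z)
        = c ⟨p - 1, Nat.sub_lt hp.pos Nat.one_pos⟩ • d z)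
    (ℓ : ℕ) (hℓ : 1 ≤ ℓ) :
    ∀ ω : Ω, ω ≠ 0 → C^[ℓ] ω = ω →
      ∀ s : ℤ, 1 ≤ s → s * (p : ℤ) ^ ℓ - 1 ≤ vΩ ω → s * (p : ℤ) ^ ℓ ≤ vΩ ω :=
  cartier_fixed_vanishing_general hp d hd_add z vF hv_mul hv_add hz hbasis hdec vΩ hvΩ C hC ℓ hℓ
end

section
/- Let L = (α_1, …, α_n) be distinct elements of F_{q^ℓ} and f ∈ F_{q^ℓ}[x] a squarefree polynomial not vanishing at any α_i. Then the classical Goppa codes satisfy Γ_q(L, f^{q−1}) = Γ_q(L, f^q), where Γ_q(L,g) := {c ∈ F_q^n : Σ_i c_i/(x−α_i) ≡ 0 mod g}. -/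
/-!
Over an algebraic closure the squarefree `f` has simple roots, none of them an `αᵢ`, so it
suffices to show that a root `β` of multiplicity `≥ q - 1` of the numerator `N` of
`∑ cᵢ / (X - αᵢ)` has multiplicity `≥ q`. Translate `β` to `0` and put `E = ∏ⱼ (X - αⱼ)`,
`Eᵢ = E / (X - αᵢ)`. Then `N E^(q-1) = ∑ cᵢ (X - αᵢ)^(q-1) Eᵢ^q`, and since a `q`-th power has no
monomials of degree `1, …, q-1`, the coefficient of `X^(q-1)` on the right is
`∑ cᵢ Eᵢ(0)^q = (∑ cᵢ Eᵢ(0))^q = N(0)^q = 0`, using `cᵢ^q = cᵢ`. On the left, `X^(q-1) ∣ N` makes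
it `N_{q-1} E(0)^(q-1)` with `E(0) ≠ 0`, so `N_{q-1} = 0`.
-/

open Polynomial Finset

section CommRing

variable {R S ι : Type*} [CommRing R] [CommRing S] [Fintype ι] [DecidableEq ι]

noncomputable def goppaNumerator (d α : ι → R) : R[X] :=
  ∑ i, C (d i) * ∏ j ∈ univ.erase i, (X - C (α j))

theorem goppaNumerator_map (φ : R →+* S) (d α : ι → R) :
    (goppaNumerator d α).map φ = goppaNumerator (φ ∘ d) (φ ∘ α) := by
  simp [goppaNumerator, Polynomial.map_sum, Polynomial.map_prod]

theorem taylor_goppaNumerator (β : R) (d α : ι → R) :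
    taylor β (goppaNumerator d α) = goppaNumerator d (fun j ↦ α j - β) := by
  simp only [goppaNumerator, map_sum, taylor_apply, mul_comp, C_comp, Polynomial.prod_comp,
    sub_comp, X_comp]
  refine sum_congr rfl fun i _ ↦ congrArg _ (prod_congr rfl fun j _ ↦ ?_)
  rw [C_sub]
  ring

theorem goppaNumerator_coeff_zero (d α : ι → R) :
    (goppaNumerator d α).coeff 0 = ∑ i, d i * ∏ j ∈ univ.erase i, -α j := by
  simp [goppaNumerator, coeff_zero_eq_eval_zero, eval_finsetSum, eval_prod]

theorem goppaNumerator_mul_prod_pow {q : ℕ} (hq : q ≠ 0) (d α : ι → R) :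
    goppaNumerator d α * (∏ j, (X - C (α j))) ^ (q - 1) =
      ∑ i, C (d i) * ((X - C (α i)) ^ (q - 1) * (∏ j ∈ univ.erase i, (X - C (α j))) ^ q) := by
  rw [goppaNumerator, sum_mul]
  refine sum_congr rfl fun i _ ↦ ?_
  obtain ⟨m, rfl⟩ := Nat.exists_eq_add_one_of_ne_zero hq
  rw [← mul_prod_erase univ _ (mem_univ i), Nat.add_sub_cancel, mul_pow]
  ring

end CommRing

theorem coeff_mul_pow_expChar_pow_of_lt {R : Type*} [CommSemiring R] {p : ℕ} [ExpChar R p]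
    {s m : ℕ} (hm : m < p ^ s) (P G : R[X]) :
    (P * G ^ p ^ s).coeff m = P.coeff m * G.coeff 0 ^ p ^ s := by
  have hG : G ^ p ^ s = C (G.coeff 0 ^ p ^ s) + X ^ p ^ s * G.divX ^ p ^ s := by
    conv_lhs => rw [← X_mul_divX_add G]
    rw [add_pow_expChar_pow, mul_pow, C_pow, add_comm]
  rw [hG, mul_add, coeff_add, mul_left_comm, coeff_X_pow_mul', if_neg (not_le.2 hm), add_zero,
    coeff_mul_C]

theorem coeff_X_sub_C_pow_self {R : Type*} [CommRing R] (a : R) (m : ℕ) :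
    ((X - C a) ^ m).coeff m = 1 := by
  rw [sub_eq_add_neg, ← C_neg, coeff_X_add_C_pow]
  simp

section ExpChar

variable {A ι : Type*} [Field A] [Fintype ι] [DecidableEq ι] {p s : ℕ} [ExpChar A p]

theorem X_pow_dvd_goppaNumerator (hq : 1 < p ^ s) {d α : ι → A} (hd : ∀ i, d i ^ p ^ s = d i)
    (hα : ∀ j, α j ≠ 0) (h : X ^ (p ^ s - 1) ∣ goppaNumerator d α) :
    X ^ p ^ s ∣ goppaNumerator d α := by
  set N := goppaNumerator d α
  set E : A[X] := ∏ j, (X - C (α j))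
  obtain ⟨U, hU⟩ := h
  have hN0 : N.coeff 0 = 0 := X_dvd_iff.1 ((dvd_pow_self X (by omega)).trans ⟨U, hU⟩)
  have hE0 : E.eval 0 ≠ 0 := by
    simp [E, eval_prod, prod_ne_zero_iff, hα]
  have hcoeff : U.coeff 0 * E.eval 0 ^ (p ^ s - 1) = N.coeff 0 ^ p ^ s := by
    calc U.coeff 0 * E.eval 0 ^ (p ^ s - 1) = (N * E ^ (p ^ s - 1)).coeff (p ^ s - 1) := by
          rw [hU, mul_assoc, coeff_X_pow_mul', if_pos le_rfl, Nat.sub_self, mul_coeff_zero,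
            coeff_zero_eq_eval_zero (E ^ _), eval_pow]
      _ = ∑ i, d i * (∏ j ∈ univ.erase i, -α j) ^ p ^ s := by
          rw [goppaNumerator_mul_prod_pow (by omega), finsetSum_coeff]
          refine sum_congr rfl fun i _ ↦ ?_
          rw [coeff_C_mul, coeff_mul_pow_expChar_pow_of_lt (by omega), coeff_X_sub_C_pow_self,
            one_mul, coeff_zero_eq_eval_zero, eval_prod]
          simp only [eval_sub, eval_X, eval_C, zero_sub]
      _ = N.coeff 0 ^ p ^ s := by
          simp_rw [N, goppaNumerator_coeff_zero, sum_pow_char_pow, mul_pow, hd]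
  rw [hN0, zero_pow (by omega), mul_eq_zero, or_iff_left (pow_ne_zero _ hE0)] at hcoeff
  rw [hU, ← Nat.sub_add_cancel hq.le, pow_succ]
  exact mul_dvd_mul_left _ (X_dvd_iff.2 hcoeff)

theorem X_sub_C_pow_dvd_goppaNumerator (hq : 1 < p ^ s) {d α : ι → A} {β : A}
    (hd : ∀ i, d i ^ p ^ s = d i) (hα : ∀ j, α j ≠ β)
    (h : (X - C β) ^ (p ^ s - 1) ∣ goppaNumerator d α) :
    (X - C β) ^ p ^ s ∣ goppaNumerator d α := by
  have hshift (k : ℕ) : (X - C β) ^ k ∣ goppaNumerator d α ↔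
      X ^ k ∣ goppaNumerator d (fun j ↦ α j - β) := by
    rw [← map_dvd_iff (taylorEquiv β), map_pow]
    change taylor β (X - C β) ^ k ∣ taylor β (goppaNumerator d α) ↔ _
    rw [taylor_goppaNumerator]
    simp [taylor_apply]
  rw [hshift] at h ⊢
  exact X_pow_dvd_goppaNumerator hq hd (fun j ↦ sub_ne_zero.2 (hα j)) h

end ExpChar

theorem Polynomial.Splits.pow_dvd_of_forall_X_sub_C_pow_dvd {R : Type*} [Field R] {f g : R[X]}
    (hf : f.Splits) (hsep : f.Separable) {k : ℕ} (h : ∀ β ∈ f.roots, (X - C β) ^ k ∣ g) :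
    f ^ k ∣ g := by
  classical
  rcases eq_or_ne g 0 with rfl | hg
  · exact dvd_zero _
  refine (hf.pow k).dvd_of_roots_le_roots (pow_ne_zero k hsep.ne_zero) ?_
  rw [roots_pow, Multiset.le_iff_count]
  intro β
  rw [Multiset.count_nsmul, count_roots g]
  by_cases hβ : β ∈ f.roots
  · rw [Multiset.count_eq_one_of_mem (nodup_roots hsep) hβ, mul_one, le_rootMultiplicity_iff hg]
    exact h β hβ
  · rw [Multiset.count_eq_zero_of_notMem hβ, mul_zero]
    exact Nat.zero_le _

theorem goppa_code_f_pow_q_sub_one_eq_f_pow_q_general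
    {K L : Type*} [Field K] [Field L] [Algebra K L] [Fintype K] [Fintype L]
    {n : ℕ} (α : Fin n → L)
    (f : Polynomial L) (hf : Squarefree f) (hfα : ∀ i : Fin n, f.eval (α i) ≠ 0) :
    {c : Fin n → K |
        f ^ (Fintype.card K - 1) ∣
          ∑ i : Fin n, Polynomial.C (algebraMap K L (c i)) *
            ∏ j ∈ Finset.univ.erase i, (Polynomial.X - Polynomial.C (α j))}
      = {c : Fin n → K |
          f ^ (Fintype.card K) ∣
            ∑ i : Fin n, Polynomial.C (algebraMap K L (c i)) *
              ∏ j ∈ Finset.univ.erase i, (Polynomial.X - Polynomial.C (α j))} := by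
  ext c
  refine ⟨fun h ↦ ?_, (pow_dvd_pow f (Nat.sub_le _ 1)).trans⟩
  change f ^ _ ∣ goppaNumerator (fun i ↦ algebraMap K L (c i)) α at h ⊢
  obtain ⟨p, _, s, hp, hcard⟩ := FiniteField.card' K
  let A := AlgebraicClosure L
  have : ExpChar K p := .prime hp
  have : ExpChar A p := expChar_of_injective_algebraMap (algebraMap K A).injective p
  rw [← map_dvd_map' (algebraMap L A), Polynomial.map_pow, goppaNumerator_map, hcard] at h ⊢
  refine (IsAlgClosed.splits _).pow_dvd_of_forall_X_sub_C_pow_dvd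
    (PerfectField.separable_iff_squarefree.2 hf).map fun β hβroot ↦ ?_
  have hβ : (f.map (algebraMap L A)).IsRoot β := isRoot_of_mem_roots hβroot
  refine X_sub_C_pow_dvd_goppaNumerator (hcard ▸ Fintype.one_lt_card) (fun i ↦ ?_)
    (fun j hj ↦ hfα j ?_) ((pow_dvd_pow_of_dvd (dvd_iff_isRoot.2 hβ) _).trans h)
  · simp only [Function.comp_apply, ← map_pow, ← hcard, FiniteField.pow_card]
  · rwa [← hj, IsRoot, Function.comp_apply, eval_map, eval₂_at_apply,
      map_eq_zero_iff _ (algebraMap L A).injective] at hβ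

/-- For `L = (α₁, …, α_n)` distinct elements of `F_{q^ℓ}` and a
squarefree polynomial `f ∈ F_{q^ℓ}[x]` not vanishing at any `αᵢ`, the classical Goppa
codes satisfy `Γ_q(L, f^{q-1}) = Γ_q(L, f^q)`, where
`Γ_q(L, g) = {c ∈ F_q^n : Σᵢ cᵢ/(x - αᵢ) ≡ 0 mod g}` (the congruence meaning that `g`
divides the numerator of the sum written over the common denominator `Πᵢ (x - αᵢ)`). -/
theorem goppa_code_f_pow_q_sub_one_eq_f_pow_q
    {K L : Type*} [Field K] [Field L] [Algebra K L] [Fintype K] [Fintype L]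
    {n : ℕ} (α : Fin n → L) (hα : Function.Injective α)
    (f : Polynomial L) (hf : Squarefree f) (hfα : ∀ i : Fin n, f.eval (α i) ≠ 0) :
    {c : Fin n → K |
        f ^ (Fintype.card K - 1) ∣
          ∑ i : Fin n, Polynomial.C (algebraMap K L (c i)) *
            ∏ j ∈ Finset.univ.erase i, (Polynomial.X - Polynomial.C (α j))}
      = {c : Fin n → K |
          f ^ (Fintype.card K) ∣
            ∑ i : Fin n, Polynomial.C (algebraMap K L (c i)) *
              ∏ j ∈ Finset.univ.erase i, (Polynomial.X - Polynomial.C (α j))} :=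
  goppa_code_f_pow_q_sub_one_eq_f_pow_q_general α f hf hfα
end
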